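/- arXiv:2601.06679 — 2 statements merged into one kernel-verified Lean document; each statement's English description precedes it below -/
import Mathlib

section
/- Let G be a locally compact group with left Haar measure μ, let A be a C*-algebra, let α be a strongly continuous action of G on A by *-automorphisms, let H be a complex Hilbert space, let π : A → B(H) be a *-representation, and let I = ker π. Then I is α-invariant (i.e., α_s(I) ⊆ I for every s ∈ G) if and only if I = { a ∈ A : for every ξ ∈ L²(G, μ; H), the function s ↦ π(α_{s⁻¹}(a))(ξ(s)) is zero μ-almost everywhere }. (This latter set is the kernel of the induced regular representation Ind_α π composed with the canonical map of A, so this says that α-invariance coincides with Nilsen α-invariance.) -/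
open MeasureTheory

/-- For an action `α` of a locally compact group `G` on a C*-algebra `A`
and a *-representation `π : A → B(H)` with `I = ker π`, the ideal `I` is `α`-invariant
iff `I` equals the kernel of the induced regular representation pulled back to `A`,
i.e. iff `I = {a | ∀ ξ ∈ L²(G,μ;H), s ↦ π(α_{s⁻¹}(a))(ξ s) = 0 μ-a.e.}`. -/
theorem action_invariant_iff_nilsen_invariant
    {G : Type*} [Group G] [TopologicalSpace G] [IsTopologicalGroup G]
    [LocallyCompactSpace G] [T2Space G]
    [MeasurableSpace G] [BorelSpace G]
    (μ : Measure G) [μ.IsHaarMeasure]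
    {A : Type*} [NonUnitalNormedRing A] [StarRing A] [CStarRing A]
    [NormedSpace ℂ A] [IsScalarTower ℂ A A] [SMulCommClass ℂ A A]
    [StarModule ℂ A] [CompleteSpace A]
    {H : Type*} [NormedAddCommGroup H] [InnerProductSpace ℂ H] [CompleteSpace H]
    -- a strongly continuous action of `G` on `A` by *-automorphisms
    (α : G → (A ≃⋆ₐ[ℂ] A))
    (hα_mul : ∀ s t : G, ∀ a : A, α (s * t) a = α s (α t a))
    (hα_cont : ∀ a : A, Continuous fun s : G => α s a)
    -- a *-representation of `A` on `H`
    (π : A →⋆ₙₐ[ℂ] (H →L[ℂ] H))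
    -- the ideal `I = ker π`
    (I : Set A) (hI : I = {a : A | π a = 0}) :
    (∀ s : G, α s '' I ⊆ I) ↔
      I = {a : A | ∀ ξ : Lp H 2 μ, ∀ᵐ s ∂μ, π (α s⁻¹ a) (ξ s) = 0} := by
  letI : NonUnitalCStarAlgebra A := {}
  -- `π` is continuous
  have hπcont : Continuous π :=
    AddMonoidHomClass.continuous_of_bound π 1
      (fun a => by simpa using NonUnitalStarAlgHom.norm_apply_le π a)
  -- the identity acts trivially
  have hid : ∀ a : A, α 1 a = a := by
    intro a
    have h := hα_mul 1 1 a
    rw [one_mul] at h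
    exact (α 1).injective h.symm
  -- key lemma : membership in the Nilsen kernel implies `π (α r⁻¹ a) = 0` for every `r`
  have key : ∀ a : A, (∀ ξ : Lp H 2 μ, ∀ᵐ s ∂μ, π (α s⁻¹ a) (ξ s) = 0) →
      ∀ r : G, π (α r⁻¹ a) = 0 := by
    intro a ha r
    ext v
    have hf : Continuous fun s : G => π (α s⁻¹ a) v := by
      have h1 : Continuous fun s : G => α s⁻¹ a := (hα_cont a).comp continuous_inv
      exact (hπcont.comp h1).clm_apply continuous_const
    obtain ⟨K, hKc, hKnhds⟩ := exists_compact_mem_nhds r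
    set ξ : Lp H 2 μ :=
      indicatorConstLp 2 hKc.measurableSet hKc.measure_lt_top.ne v with hξ
    have h1 := ha ξ
    have h2 : (ξ : G → H) =ᵐ[μ] K.indicator fun _ => v := indicatorConstLp_coeFn
    have hae : ∀ᵐ s ∂μ, s ∈ K → π (α s⁻¹ a) v = 0 := by
      filter_upwards [h1, h2] with s h1s h2s hsK
      rw [h2s, Set.indicator_of_mem hsK] at h1s
      exact h1s
    -- the set where the continuous function is nonzero, intersected with `interior K`,
    -- is open and null, hence empty
    have hVopen : IsOpen (interior K ∩ {s : G | π (α s⁻¹ a) v ≠ 0}) :=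
      isOpen_interior.inter ((isClosed_singleton.preimage hf).isOpen_compl)
    have hVnull : μ (interior K ∩ {s : G | π (α s⁻¹ a) v ≠ 0}) = 0 := by
      refine measure_mono_null ?_ hae
      rintro s ⟨hs1, hs2⟩
      exact fun h => hs2 (h (interior_subset hs1))
    by_contra hv
    have hrV : r ∈ interior K ∩ {s : G | π (α s⁻¹ a) v ≠ 0} :=
      ⟨mem_interior_iff_mem_nhds.mpr hKnhds, fun h => hv (by simpa using h)⟩
    exact absurd hVnull (hVopen.measure_pos μ ⟨r, hrV⟩).ne'
  constructor
  · -- invariance implies Nilsen invariance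
    intro hinv
    rw [hI]
    ext a
    simp only [Set.mem_setOf_eq]
    constructor
    · intro hπa ξ
      refine Filter.Eventually.of_forall fun s => ?_
      have hmem : α s⁻¹ a ∈ I := hinv s⁻¹ ⟨a, hI ▸ hπa, rfl⟩
      rw [hI] at hmem
      rw [Set.mem_setOf_eq] at hmem
      rw [hmem]
      rfl
    · intro hN
      have h := key a hN 1
      rw [inv_one, hid] at h
      exact h
  · -- Nilsen invariance implies invariance
    intro hEq s
    rintro _ ⟨a, haI, rfl⟩
    rw [hEq] at haI ⊢
    intro ξ
    refine Filter.Eventually.of_forall fun t => ?_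
    have h : π (α t⁻¹ (α s a)) = 0 := by
      rw [← hα_mul]
      have := key a haI (s⁻¹ * t)
      rwa [show (s⁻¹ * t)⁻¹ = t⁻¹ * s by group] at this
    rw [h]
    rfl
end

section
/- Let G be a locally compact group with left Haar measure μ, let A be a C*-algebra, let α be a strongly continuous action of G on A by *-automorphisms, let H be a complex Hilbert space, let π : A → B(H) be a *-representation, and let I = ker π. Then { a ∈ A : for every ξ ∈ L²(G, μ; H), the function s ↦ π(α_{s⁻¹}(a))(ξ(s)) vanishes μ-almost everywhere } = { a ∈ A : α_s(a) ∈ I for every s ∈ G } = ⋂_{s ∈ G} α_s⁻¹(I). In other words, the kernel of the induced regular representation of π pulled back to A is exactly the largest subset of A carried into I by every α_s. -/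
open MeasureTheory ENNReal

/-- The kernel of the induced regular representation of `π` pulled back
to `A` equals `{a | α_s(a) ∈ I for all s ∈ G}`, which in turn equals
`⋂_{s ∈ G} α_s⁻¹(I)`, where `I = ker π`: it is the largest subset of `A` carried
into `I` by every `α_s`. -/
theorem kernel_of_induced_eq_largest_invariant
    {G : Type*} [Group G] [TopologicalSpace G] [IsTopologicalGroup G]
    [LocallyCompactSpace G] [T2Space G]
    [MeasurableSpace G] [BorelSpace G]
    (μ : Measure G) [μ.IsHaarMeasure]
    {A : Type*} [NonUnitalNormedRing A] [StarRing A] [CStarRing A]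
    [NormedSpace ℂ A] [IsScalarTower ℂ A A] [SMulCommClass ℂ A A]
    [StarModule ℂ A] [CompleteSpace A]
    {H : Type*} [NormedAddCommGroup H] [InnerProductSpace ℂ H] [CompleteSpace H]
    -- a strongly continuous action of `G` on `A` by *-automorphisms
    (α : G → (A ≃⋆ₐ[ℂ] A))
    (hα_mul : ∀ s t : G, ∀ a : A, α (s * t) a = α s (α t a))
    (hα_cont : ∀ a : A, Continuous fun s : G => α s a)
    -- a *-representation of `A` on `H`
    (π : A →⋆ₙₐ[ℂ] (H →L[ℂ] H))
    -- the ideal `I = ker π`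
    (I : Set A) (hI : I = {a : A | π a = 0}) :
    {a : A | ∀ ξ : Lp H 2 μ, ∀ᵐ s ∂μ, π (α s⁻¹ a) (ξ s) = 0}
        = {a : A | ∀ s : G, α s a ∈ I} ∧
      {a : A | ∀ s : G, α s a ∈ I} = ⋂ s : G, (α s) ⁻¹' I := by
  subst hI
  constructor
  · ext a
    simp only [Set.mem_setOf_eq]
    constructor
    · intro h s
      letI : NonUnitalCStarAlgebra A :=
        { ‹NonUnitalNormedRing A›, ‹StarRing A›, ‹CStarRing A›, ‹NormedSpace ℂ A›,
          ‹IsScalarTower ℂ A A›, ‹SMulCommClass ℂ A A›, ‹StarModule ℂ A›,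
          ‹CompleteSpace A› with }
      have hπcont : Continuous π :=
        AddMonoidHomClass.continuous_of_bound π 1
          (by simpa only [one_mul] using NonUnitalStarAlgHom.norm_apply_le π)
      refine ContinuousLinearMap.ext fun v => ?_
      -- choose an open neighborhood of s⁻¹ with compact closure
      obtain ⟨U, hUopen, hUmem, hUcomp⟩ := exists_isOpen_mem_isCompact_closure (s⁻¹ : G)
      have hμU : μ U ≠ ∞ :=
        ((measure_mono subset_closure).trans_lt hUcomp.measure_lt_top).ne
      set ξ : Lp H 2 μ := indicatorConstLp 2 hUopen.measurableSet hμU v with hξ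
      have hcoe : (ξ : G → H) =ᵐ[μ] U.indicator (fun _ => v) := indicatorConstLp_coeFn
      have h1 := h ξ
      have h2 : ∀ᵐ t ∂μ, t ∈ U → π (α t⁻¹ a) v = 0 := by
        filter_upwards [h1, hcoe] with t h1t h2t htU
        rw [h2t, Set.indicator_of_mem htU] at h1t
        exact h1t
      have h3 : (fun t => π (α t⁻¹ a) v) =ᵐ[μ.restrict U] (fun _ => (0 : H)) :=
        (ae_restrict_iff' hUopen.measurableSet).2 h2
      have hg : Continuous fun t : G => π (α t⁻¹ a) v := by
        have : Continuous fun t : G => α t⁻¹ a := (hα_cont a).comp continuous_inv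
        exact ((hπcont.comp this).clm_apply continuous_const)
      have heq : Set.EqOn (fun t => π (α t⁻¹ a) v) (fun _ => (0 : H)) U :=
        μ.eqOn_open_of_ae_eq h3 hUopen hg.continuousOn continuousOn_const
      have := heq hUmem
      simpa using this
    · intro h ξ
      refine Filter.Eventually.of_forall fun t => ?_
      rw [h t⁻¹]
      simp
  · ext a
    simp [Set.mem_iInter]
end
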